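/- Let X be a length space and I ⊆ ℝ a nondegenerate interval. Define d̄ on I × X by d̄((s,x),(t,y)) := ((s − t)² + d(x,y)²)^{1/2} (the distance of the Riemannian product metric dt² + σ). Then d̄ is a metric on I × X, and the identity map from (I × X, d̂_σ) to (I × X, d̄) is bi-Lipschitz; precisely, for all p, q ∈ I × X: d̂_σ(p,q) ≤ d̄(p,q) ≤ √2 · d̂_σ(p,q), where d̂_σ is the null distance of the Lorentzian product I × X. -/

import Mathlib

open MeasureTheory

/-- Causal relation of the warped product `I ×_f X`; for `f ≡ 1` it is the causal relation
of the Lorentzian product: `(s,x) ≼ (t,y)` iff `s ≤ t` and `d(x,y) ≤ t − s`. -/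
def WPCausal {X : Type*} [MetricSpace X] (f : ℝ → ℝ) (p q : ℝ × X) : Prop :=
  p.1 ≤ q.1 ∧
    ENNReal.ofReal (dist p.2 q.2) ≤ ∫⁻ u in Set.Ioc p.1 q.1, ENNReal.ofReal ((f u)⁻¹)

/-- `σ` is a piecewise causal chain with `n+1` segments from `p` to `q` inside `I × X`. -/
def WPChain {X : Type*} [MetricSpace X] (I : Set ℝ) (f : ℝ → ℝ) (p q : ℝ × X) (n : ℕ)
    (σ : ℕ → ℝ × X) : Prop :=
  σ 0 = p ∧ σ (n + 1) = q ∧ (∀ i ≤ n + 1, (σ i).1 ∈ I) ∧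
    ∀ i ≤ n, WPCausal f (σ i) (σ (i + 1)) ∨ WPCausal f (σ (i + 1)) (σ i)

/-- The null distance of the warped product `I ×_f X`. -/
noncomputable def nullDist {X : Type*} [MetricSpace X] (I : Set ℝ) (f : ℝ → ℝ)
    (p q : ℝ × X) : ℝ :=
  sInf { r | ∃ n σ, WPChain I f p q n σ ∧
    r = ∑ i ∈ Finset.range (n + 1), |(σ (i + 1)).1 - (σ i).1| }

/-- The distance of the Riemannian product `dt² + σ` on `ℝ × X`. -/
noncomputable def riemProdDist {X : Type*} [MetricSpace X] (p q : ℝ × X) : ℝ :=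
  Real.sqrt ((p.1 - q.1) ^ 2 + dist p.2 q.2 ^ 2)

/-!
Every causal segment from `(s, x)` to `(t, y)` has null length `|t - s| ≥ d(x, y)`, so by the
triangle inequality in `X` and telescoping in time every piecewise causal chain has null length
at least `max (|t - s|, d(x, y))`. Conversely, approximate midpoints let a chain zigzag in time:
`(h, x) → (h ± d, z) → (h, y)` with `z` an approximate midpoint costs about `d(x, y)`, and
repeated halving keeps the excursions `d` inside `I`. Going causally from `(s, x)` to `(t, w)`,
where `w` is an approximate point at distance `min (|t - s|, d(x, y))` from `x` on the way to
`y`, and then zigzagging at time `t` gives chains of null length close to that maximum. So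
`d̂_σ = max (|t - s|, d(x, y))`, while `d̄` is the `ℓ²` combination of the same two numbers
(the `L²` product metric), which lies between the maximum and `√2` times it.
-/

section NullDistance

variable {X : Type*} [MetricSpace X]

theorem wpCausal_one_iff (p q : ℝ × X) :
    WPCausal (fun _ => (1 : ℝ)) p q ↔ p.1 ≤ q.1 ∧ dist p.2 q.2 ≤ q.1 - p.1 := by
  rw [WPCausal, inv_one, setLIntegral_const, Real.volume_Ioc, ENNReal.ofReal_one, one_mul]
  exact and_congr_right fun h => ENNReal.ofReal_le_ofReal_iff (sub_nonneg.2 h)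

theorem wpCausal_one_or_iff (p q : ℝ × X) :
    WPCausal (fun _ => (1 : ℝ)) p q ∨ WPCausal (fun _ => (1 : ℝ)) q p ↔
      dist p.2 q.2 ≤ |q.1 - p.1| := by
  have := dist_nonneg (x := p.2) (y := q.2)
  rw [wpCausal_one_iff, wpCausal_one_iff, dist_comm q.2, le_abs]
  constructor
  · rintro (h | h) <;> [left; right] <;> linarith [h.2]
  · rintro (h | h) <;> [left; right] <;> constructor <;> linarith

def nullLengths (I : Set ℝ) (f : ℝ → ℝ) (p q : ℝ × X) : Set ℝ :=
  { ℓ | ∃ n σ, WPChain I f p q n σ ∧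
    ℓ = ∑ i ∈ Finset.range (n + 1), |(σ (i + 1)).1 - (σ i).1| }

variable {I : Set ℝ} {f : ℝ → ℝ} {p q r : ℝ × X}

theorem nonneg_of_mem_nullLengths {ℓ : ℝ} (h : ℓ ∈ nullLengths I f p q) : 0 ≤ ℓ := by
  obtain ⟨n, σ, -, rfl⟩ := h
  exact Finset.sum_nonneg fun i _ => abs_nonneg _

theorem add_mem_nullLengths {ℓ₁ ℓ₂ : ℝ} (h₁ : ℓ₁ ∈ nullLengths I f p q)
    (h₂ : ℓ₂ ∈ nullLengths I f q r) : ℓ₁ + ℓ₂ ∈ nullLengths I f p r := by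
  obtain ⟨m, σ, ⟨hσ0, hσm, hσI, hσc⟩, rfl⟩ := h₁
  obtain ⟨n, τ, ⟨hτ0, hτn, hτI, hτc⟩, rfl⟩ := h₂
  set ρ : ℕ → ℝ × X := fun i => if i < m + 1 then σ i else τ (i - (m + 1))
  have hρσ : ∀ i ≤ m + 1, ρ i = σ i := by
    intro i hi
    rcases hi.lt_or_eq with hi | rfl
    · simp only [ρ, if_pos hi]
    · simp only [ρ, lt_irrefl, if_false, Nat.sub_self, hτ0, hσm]
  have hρτ : ∀ j, ρ (m + 1 + j) = τ j := by
    intro j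
    simp only [ρ, if_neg (Nat.not_lt.2 (Nat.le_add_right _ j)), Nat.add_sub_cancel_left]
  have hlen : m + n + 1 + 1 = m + 1 + (n + 1) := by ring
  refine ⟨m + n + 1, ρ, ⟨?_, ?_, ?_, ?_⟩, ?_⟩
  · rw [hρσ 0 (by omega), hσ0]
  · rw [hlen, hρτ, hτn]
  · intro i hi
    rcases le_or_gt i (m + 1) with h | h
    · rw [hρσ i h]; exact hσI i h
    · obtain ⟨j, rfl⟩ := Nat.exists_eq_add_of_le h.le
      rw [hρτ]; exact hτI j (by omega)
  · intro i hi
    rcases le_or_gt i m with h | h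
    · rw [hρσ i (by omega), hρσ (i + 1) (by omega)]; exact hσc i h
    · obtain ⟨j, rfl⟩ := Nat.exists_eq_add_of_le h
      rw [add_assoc, hρτ, hρτ]; exact hτc j (by omega)
  · rw [hlen, Finset.sum_range_add (fun i => |(ρ (i + 1)).1 - (ρ i).1|)]
    congr 1
    · refine Finset.sum_congr rfl fun i hi => ?_
      have := Finset.mem_range.1 hi
      rw [hρσ i (by omega), hρσ (i + 1) (by omega)]
    · refine Finset.sum_congr rfl fun j _ => ?_
      rw [add_assoc, hρτ, hρτ]

/-- Stronger than `nullDist I f p q ≤ L`, which also holds when there is no chain at all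
(`sInf ∅ = 0`). -/
def HasNullChainsLE (I : Set ℝ) (f : ℝ → ℝ) (p q : ℝ × X) (L : ℝ) : Prop :=
  ∀ ε > 0, ∃ ℓ ∈ nullLengths I f p q, ℓ ≤ L + ε

namespace HasNullChainsLE

variable {L L' : ℝ}

theorem of_mem {ℓ : ℝ} (h : ℓ ∈ nullLengths I f p q) : HasNullChainsLE I f p q ℓ :=
  fun _ hε => ⟨ℓ, h, le_add_of_nonneg_right hε.le⟩

theorem mono (h : HasNullChainsLE I f p q L) (hL : L ≤ L') : HasNullChainsLE I f p q L' :=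
  fun ε hε => (h ε hε).imp fun _ hℓ => ⟨hℓ.1, by linarith [hℓ.2]⟩

theorem of_forall_pos (h : ∀ ε > 0, HasNullChainsLE I f p q (L + ε)) :
    HasNullChainsLE I f p q L := fun ε hε =>
  (h (ε / 2) (half_pos hε) (ε / 2) (half_pos hε)).imp fun _ hℓ =>
    ⟨hℓ.1, by linarith [hℓ.2]⟩

theorem trans {A B : ℝ} (h₁ : HasNullChainsLE I f p q A) (h₂ : HasNullChainsLE I f q r B) :
    HasNullChainsLE I f p r (A + B) := by
  intro ε hε
  obtain ⟨ℓ₁, hℓ₁, hle₁⟩ := h₁ (ε / 2) (half_pos hε)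
  obtain ⟨ℓ₂, hℓ₂, hle₂⟩ := h₂ (ε / 2) (half_pos hε)
  exact ⟨ℓ₁ + ℓ₂, add_mem_nullLengths hℓ₁ hℓ₂, by linarith⟩

theorem nonempty (h : HasNullChainsLE I f p q L) : (nullLengths I f p q).Nonempty :=
  let ⟨ℓ, hℓ, _⟩ := h 1 one_pos
  ⟨ℓ, hℓ⟩

theorem nullDist_le (h : HasNullChainsLE I f p q L) : nullDist I f p q ≤ L := by
  refine le_of_forall_pos_le_add fun ε hε => ?_
  obtain ⟨ℓ, hℓ, hle⟩ := h ε hε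
  exact (csInf_le ⟨0, fun _ => nonneg_of_mem_nullLengths⟩ hℓ).trans hle

end HasNullChainsLE

theorem abs_sub_mem_nullLengths (hp : p.1 ∈ I) (hq : q.1 ∈ I)
    (h : dist p.2 q.2 ≤ |q.1 - p.1|) :
    |q.1 - p.1| ∈ nullLengths I (fun _ => 1) p q := by
  refine ⟨0, fun i => if i = 0 then p else q,
    ⟨rfl, rfl, fun i hi => ?_, fun i hi => ?_⟩, ?_⟩
  · interval_cases i
    exacts [hp, hq]
  · obtain rfl : i = 0 := by omega
    exact (wpCausal_one_or_iff p q).2 h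
  · simp

theorem max_le_of_mem_nullLengths {ℓ : ℝ} (h : ℓ ∈ nullLengths I (fun _ => 1) p q) :
    max |q.1 - p.1| (dist p.2 q.2) ≤ ℓ := by
  obtain ⟨n, σ, ⟨hσ0, hσn, -, hσc⟩, rfl⟩ := h
  have hstep : ∀ i ∈ Finset.range (n + 1),
      dist (σ i).2 (σ (i + 1)).2 ≤ |(σ (i + 1)).1 - (σ i).1| :=
    fun i hi => (wpCausal_one_or_iff _ _).1 (hσc i (Nat.lt_succ_iff.1 (Finset.mem_range.1 hi)))
  refine max_le ?_ ?_
  · calc |q.1 - p.1| = |∑ i ∈ Finset.range (n + 1), ((σ (i + 1)).1 - (σ i).1)| := by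
          rw [Finset.sum_range_sub (fun i => (σ i).1), hσ0, hσn]
      _ ≤ _ := Finset.abs_sum_le_sum_abs _ _
  · calc dist p.2 q.2 ≤ ∑ i ∈ Finset.range (n + 1), dist (σ i).2 (σ (i + 1)).2 := by
          rw [← hσ0, ← hσn]; exact dist_le_range_sum_dist (fun i => (σ i).2) (n + 1)
      _ ≤ _ := Finset.sum_le_sum hstep

end NullDistance

section LengthSpace

def IsLengthSpace (X : Type*) [MetricSpace X] : Prop :=
  ∀ x y : X, ∀ ε : ℝ, 0 < ε → ∃ z : X, max (dist x z) (dist z y) ≤ dist x y / 2 + ε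

variable {X : Type*} [MetricSpace X]

theorem IsLengthSpace.exists_midpoint_lt (hX : IsLengthSpace X) {x y : X} {R ε : ℝ}
    (hR : dist x y < R) (hε : 0 < ε) :
    ∃ z, max (dist x z) (dist z y) < R / 2 ∧
      max (dist x z) (dist z y) ≤ dist x y / 2 + ε := by
  obtain ⟨z, hz⟩ := hX x y (min ε ((R - dist x y) / 4)) (lt_min hε (by linarith))
  have h₁ := min_le_left ε ((R - dist x y) / 4)
  have h₂ := min_le_right ε ((R - dist x y) / 4)
  exact ⟨z, by linarith, by linarith⟩

theorem IsLengthSpace.exists_approx_intermediate_of_lt_two_pow (hX : IsLengthSpace X) {η : ℝ}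
    (k : ℕ) :
    ∀ x y : X, dist x y < 2 ^ k * η → ∀ r, 0 ≤ r → r ≤ dist x y → ∀ ε > 0,
      ∃ w, dist x w ≤ r ∧ dist w y ≤ dist x y - r + η + ε := by
  induction k with
  | zero =>
    intro x y hxy r hr0 hr ε hε
    exact ⟨x, by simpa using hr0, by linarith⟩
  | succ k ih =>
    intro x y hxy r hr0 hr ε hε
    obtain ⟨z, hzR, hz⟩ := hX.exists_midpoint_lt hxy (ε := ε / 4) (by positivity)
    rw [pow_succ, mul_assoc, mul_div_assoc, mul_div_cancel_left₀ _ two_ne_zero] at hzR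
    have hxz := (le_max_left _ _).trans_lt hzR
    have hzy := (le_max_right _ _).trans_lt hzR
    have hsum : dist x z + dist z y ≤ dist x y + ε / 2 := by
      linarith [le_max_left (dist x z) (dist z y), le_max_right (dist x z) (dist z y)]
    rcases le_or_gt r (dist x z) with hrz | hrz
    · obtain ⟨w, hxw, hwz⟩ := ih x z hxz r hr0 hrz (ε / 2) (half_pos hε)
      exact ⟨w, hxw, by linarith [dist_triangle w z y]⟩
    · obtain ⟨w, hzw, hwy⟩ :=
        ih z y hzy (r - dist x z) (by linarith) (by linarith [dist_triangle x z y]) (ε / 2)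
          (half_pos hε)
      exact ⟨w, by linarith [dist_triangle x z w], by linarith⟩

theorem IsLengthSpace.exists_approx_intermediate (hX : IsLengthSpace X) {x y : X} {r ε : ℝ}
    (hr0 : 0 ≤ r) (hr : r ≤ dist x y) (hε : 0 < ε) :
    ∃ w, dist x w ≤ r ∧ dist w y ≤ dist x y - r + ε := by
  obtain ⟨k, hk⟩ := pow_unbounded_of_one_lt (dist x y / (ε / 2)) one_lt_two
  rw [div_lt_iff₀ (half_pos hε)] at hk
  obtain ⟨w, hxw, hwy⟩ :=
    hX.exists_approx_intermediate_of_lt_two_pow k x y hk r hr0 hr (ε / 2) (half_pos hε)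
  exact ⟨w, hxw, by linarith⟩

end LengthSpace

theorem Set.OrdConnected.exists_mem_abs_sub_eq {I : Set ℝ} (hI : I.OrdConnected) {a b h d : ℝ}
    (ha : a ∈ I) (hb : b ∈ I) (hh : h ∈ I) (hd0 : 0 ≤ d) (hd : 2 * d ≤ b - a) :
    ∃ u ∈ I, |u - h| = d := by
  by_cases hup : h + d ∈ I
  · exact ⟨h + d, hup, by rw [add_sub_cancel_left, abs_of_nonneg hd0]⟩
  · have hbh : b < h + d := by
      by_contra! hle
      exact hup (hI.out hh hb ⟨by linarith, hle⟩)
    refine ⟨h - d, hI.out ha hh ⟨by linarith, by linarith⟩, ?_⟩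
    rw [sub_sub_cancel_left, abs_neg, abs_of_nonneg hd0]

section NullDistanceOfProduct

variable {X : Type*} [MetricSpace X] {I : Set ℝ} {a b : ℝ}

theorem hasNullChainsLE_of_dist_lt (hX : IsLengthSpace X) (hI : I.OrdConnected) (ha : a ∈ I)
    (hb : b ∈ I) {h : ℝ} (hh : h ∈ I) {x y : X} (hxy : dist x y < b - a) :
    HasNullChainsLE I (fun _ => 1) (h, x) (h, y) (dist x y) := by
  refine HasNullChainsLE.of_forall_pos fun ε hε => ?_
  obtain ⟨z, hzR, hz⟩ := hX.exists_midpoint_lt hxy (half_pos hε)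
  set d := max (dist x z) (dist z y)
  obtain ⟨u, hu, hud⟩ := hI.exists_mem_abs_sub_eq ha hb hh (le_max_of_le_left dist_nonneg)
    (by linarith)
  have hout : |u - h| ∈ nullLengths I (fun _ => 1) (h, x) (u, z) :=
    abs_sub_mem_nullLengths hh hu (hud.symm ▸ le_max_left _ _)
  have hback : |h - u| ∈ nullLengths I (fun _ => 1) (u, z) (h, y) :=
    abs_sub_mem_nullLengths hu hh (abs_sub_comm h u ▸ hud.symm ▸ le_max_right _ _)
  refine (HasNullChainsLE.of_mem (add_mem_nullLengths hout hback)).mono ?_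
  rw [abs_sub_comm h u, hud]
  linarith

theorem hasNullChainsLE_of_dist_lt_two_pow (hX : IsLengthSpace X) (hI : I.OrdConnected)
    (ha : a ∈ I) (hb : b ∈ I) {h : ℝ} (hh : h ∈ I) (k : ℕ) :
    ∀ x y : X, dist x y < 2 ^ k * (b - a) →
      HasNullChainsLE I (fun _ => 1) (h, x) (h, y) (dist x y) := by
  induction k with
  | zero => simpa using fun x y => hasNullChainsLE_of_dist_lt hX hI ha hb hh
  | succ k ih =>
    intro x y hxy
    refine HasNullChainsLE.of_forall_pos fun ε hε => ?_
    obtain ⟨z, hzR, hz⟩ := hX.exists_midpoint_lt hxy (half_pos hε)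
    rw [pow_succ, mul_assoc, mul_div_assoc, mul_div_cancel_left₀ _ two_ne_zero] at hzR
    refine ((ih x z ((le_max_left _ _).trans_lt hzR)).trans
      (ih z y ((le_max_right _ _).trans_lt hzR))).mono ?_
    linarith [le_max_left (dist x z) (dist z y), le_max_right (dist x z) (dist z y)]

theorem hasNullChainsLE_of_fst_eq (hX : IsLengthSpace X) (hI : I.OrdConnected) (ha : a ∈ I)
    (hb : b ∈ I) (hab : a < b) {h : ℝ} (hh : h ∈ I) (x y : X) :
    HasNullChainsLE I (fun _ => 1) (h, x) (h, y) (dist x y) := by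
  obtain ⟨k, hk⟩ := pow_unbounded_of_one_lt (dist x y / (b - a)) one_lt_two
  rw [div_lt_iff₀ (sub_pos.2 hab)] at hk
  exact hasNullChainsLE_of_dist_lt_two_pow hX hI ha hb hh k x y hk

theorem hasNullChainsLE_max (hX : IsLengthSpace X) (hI : I.OrdConnected) (ha : a ∈ I)
    (hb : b ∈ I) (hab : a < b) {p q : ℝ × X} (hp : p.1 ∈ I) (hq : q.1 ∈ I) :
    HasNullChainsLE I (fun _ => 1) p q (max |q.1 - p.1| (dist p.2 q.2)) := by
  refine HasNullChainsLE.of_forall_pos fun ε hε => ?_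
  obtain ⟨w, hpw, hwq⟩ := hX.exists_approx_intermediate (x := p.2) (y := q.2)
    (le_min (abs_nonneg (q.1 - p.1)) dist_nonneg) (min_le_right _ _) hε
  have hstep : HasNullChainsLE I (fun _ => 1) p (q.1, w) |q.1 - p.1| :=
    .of_mem (abs_sub_mem_nullLengths hp hq (hpw.trans (min_le_left _ _)))
  refine (hstep.trans (hasNullChainsLE_of_fst_eq hX hI ha hb hab hq w q.2)).mono ?_
  linarith [min_add_max |q.1 - p.1| (dist p.2 q.2)]

theorem nullDist_one_eq_max (hX : IsLengthSpace X) (hI : I.OrdConnected) (ha : a ∈ I)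
    (hb : b ∈ I) (hab : a < b) {p q : ℝ × X} (hp : p.1 ∈ I) (hq : q.1 ∈ I) :
    nullDist I (fun _ => 1) p q = max |q.1 - p.1| (dist p.2 q.2) :=
  have h := hasNullChainsLE_max hX hI ha hb hab hp hq
  h.nullDist_le.antisymm (le_csInf h.nonempty fun _ => max_le_of_mem_nullLengths)

end NullDistanceOfProduct

section RiemannianProductDistance

theorem riemProdDist_eq_dist_toLp {X : Type*} [MetricSpace X] (p q : ℝ × X) :
    riemProdDist p q = dist (WithLp.toLp 2 p) (WithLp.toLp 2 q) := by
  rw [WithLp.prod_dist_eq_add (by norm_num), riemProdDist, Real.sqrt_eq_rpow]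
  norm_num [Real.dist_eq, sq_abs]

theorem max_abs_le_sqrt_sq_add_sq (a : ℝ) {b : ℝ} (hb : 0 ≤ b) :
    max |a| b ≤ √(a ^ 2 + b ^ 2) :=
  max_le (Real.abs_le_sqrt (by nlinarith)) ((abs_of_nonneg hb).symm.trans_le
    (Real.abs_le_sqrt (by nlinarith)))

theorem sqrt_sq_add_sq_le_sqrt_two_mul_max (a : ℝ) {b : ℝ} (hb : 0 ≤ b) :
    √(a ^ 2 + b ^ 2) ≤ √2 * max |a| b := by
  rw [← Real.sqrt_sq (le_max_of_le_right hb), ← Real.sqrt_mul zero_le_two]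
  refine Real.sqrt_le_sqrt ?_
  rw [← sq_abs a]
  nlinarith [pow_le_pow_left₀ (abs_nonneg a) (le_max_left |a| b) 2,
    pow_le_pow_left₀ hb (le_max_right |a| b) 2]

end RiemannianProductDistance

/-- on a length space `X` and nondegenerate interval `I`, the Pythagorean
product distance `d̄` is a metric on `I × X` and the identity map is bi-Lipschitz between
the null distance `d̂_σ` of the Lorentzian product and `d̄`:
`d̂_σ ≤ d̄ ≤ √2 · d̂_σ`. -/
theorem stmt4 {X : Type*} [MetricSpace X]
    (hX : ∀ x y : X, ∀ ε : ℝ, 0 < ε →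
      ∃ z : X, max (dist x z) (dist z y) ≤ dist x y / 2 + ε)
    (I : Set ℝ) (hIc : I.OrdConnected) (hInd : ∃ a ∈ I, ∃ b ∈ I, a < b) :
    (∀ p q : ℝ × X, p.1 ∈ I → q.1 ∈ I →
      (riemProdDist p q = 0 ↔ p = q)) ∧
    (∀ p q : ℝ × X, p.1 ∈ I → q.1 ∈ I →
      riemProdDist p q = riemProdDist q p) ∧
    (∀ p q r : ℝ × X, p.1 ∈ I → q.1 ∈ I → r.1 ∈ I →
      riemProdDist p r ≤ riemProdDist p q + riemProdDist q r) ∧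
    (∀ p q : ℝ × X, p.1 ∈ I → q.1 ∈ I →
      nullDist I (fun _ => (1 : ℝ)) p q ≤ riemProdDist p q ∧
      riemProdDist p q ≤ Real.sqrt 2 * nullDist I (fun _ => (1 : ℝ)) p q) := by
  obtain ⟨a, ha, b, hb, hab⟩ := hInd
  refine ⟨fun p q _ _ => ?_, fun p q _ _ => ?_, fun p q r _ _ _ => ?_, fun p q hp hq => ?_⟩
  · rw [riemProdDist_eq_dist_toLp, dist_eq_zero, (WithLp.toLp_injective 2).eq_iff]
  · simp only [riemProdDist_eq_dist_toLp, dist_comm]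
  · simp only [riemProdDist_eq_dist_toLp]
    exact dist_triangle _ _ _
  · rw [nullDist_one_eq_max hX hIc ha hb hab hp hq, riemProdDist, abs_sub_comm q.1]
    exact ⟨max_abs_le_sqrt_sq_add_sq _ dist_nonneg,
      sqrt_sq_add_sq_le_sqrt_two_mul_max _ dist_nonneg⟩
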